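/- Let N ≥ 3 be an integer and y₁ < y₂ < ⋯ < y_{2N} be real numbers. For u in the closed upper half-plane with u ∉ {y₁,…,y_{2N}}, let Π(u) = ∏_{j=1}^{2N} exp(½ Log(u − y_j)), where Log is the principal branch of the complex logarithm; Π is the branch of ∏_j (u − y_j)^{1/2} that is positive for real u > y_{2N}. Define the (N−2)×(N−2) complex matrix R by R(i,j) = ∫_{y_{2i+1}}^{y_{2i+2}} u^{j−1} / Π(u) du for 1 ≤ i, j ≤ N−2 (the improper integrals converge since the integrand has integrable singularities of order −1/2 at the endpoints). Then R is invertible. -/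

import Mathlib

open Set Filter Complex MeasureTheory intervalIntegral

noncomputable section

/-- `sqrtProd N y u = ∏_{j=1}^{2N} (u - y_j)^{1/2}`, the branch defined via the principal
logarithm, which is positive for real `u > y_{2N}`. -/
def sqrtProd (N : ℕ) (y : ℕ → ℝ) (u : ℂ) : ℂ :=
  ∏ j ∈ Finset.Icc 1 (2 * N), Complex.exp ((1 / 2 : ℂ) * Complex.log (u - (y j : ℂ)))

/-- The matrix `R(i,j) = ∫_{y_{2i+1}}^{y_{2i+2}} u^{j-1} / Π(u) du`, `1 ≤ i,j ≤ N-2`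
(written here with `0`-based indices `i j : Fin (N-2)`). -/
def schwarzChristoffelMatrix (N : ℕ) (y : ℕ → ℝ) :
    Matrix (Fin (N - 2)) (Fin (N - 2)) ℂ :=
  Matrix.of fun i j =>
    ∫ u in (y (2 * (i : ℕ) + 3))..(y (2 * (i : ℕ) + 4)), ((u : ℂ) ^ (j : ℕ)) / sqrtProd N y u

def gA (N : ℕ) (y : ℕ → ℝ) (u : ℝ) : ℝ :=
  ∏ j ∈ Finset.Icc 1 (2 * N), Real.sqrt |u - y j|

lemma gA_cont (N : ℕ) (y : ℕ → ℝ) : Continuous (gA N y) := by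
  unfold gA
  exact continuous_finset_prod _ fun j _ =>
    (Real.continuous_sqrt.comp ((continuous_id.sub continuous_const).abs))

lemma A1 (x : ℝ) (hx : 0 < x) : Complex.exp ((1/2:ℂ) * Complex.log (x:ℂ)) = (Real.sqrt x : ℂ) := by
  rw [← Complex.ofReal_log hx.le, Real.sqrt_eq_rpow, Real.rpow_def_of_pos hx]
  rw [show ((1/2:ℂ) * (Real.log x : ℂ)) = ((Real.log x * (1/2) : ℝ) : ℂ) by push_cast; ring]
  rw [← Complex.ofReal_exp]

lemma A2 (x : ℝ) (hx : x < 0) : Complex.exp ((1/2:ℂ) * Complex.log (x:ℂ)) =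
    Complex.I * (Real.sqrt |x| : ℝ) := by
  have h1 : Complex.log (x:ℂ) = Real.log |x| + Real.pi * Complex.I := by
    rw [Complex.log, Complex.norm_real, Real.norm_eq_abs, Complex.arg_ofReal_of_neg hx]
  rw [h1]
  have : (1/2:ℂ) * (Real.log |x| + Real.pi * Complex.I)
      = ((Real.log |x| * (1/2) : ℝ) : ℂ) + (Real.pi/2 : ℝ) * Complex.I := by push_cast; ring
  rw [this, Complex.exp_add, ← Complex.ofReal_exp, ← Real.rpow_def_of_pos (abs_pos.mpr hx.ne),
    ← Real.sqrt_eq_rpow, Complex.exp_mul_I]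
  simp [Real.cos_pi_div_two, Real.sin_pi_div_two, mul_comm]

lemma sqrtProd_factor (N : ℕ) (y : ℕ → ℝ) (u : ℝ) (h : ∀ j ∈ Finset.Icc 1 (2*N), u ≠ y j) :
    sqrtProd N y (u:ℂ) =
      Complex.I ^ ((Finset.Icc 1 (2*N)).filter (fun j => u < y j)).card * (gA N y u : ℂ) := by
  unfold sqrtProd
  have key : ∀ j ∈ Finset.Icc 1 (2*N),
      Complex.exp ((1/2:ℂ) * Complex.log ((u:ℂ) - (y j : ℂ)))
        = (if u < y j then Complex.I else 1) * (Real.sqrt |u - y j| : ℂ) := by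
    intro j hj
    have hc : (u:ℂ) - (y j : ℂ) = ((u - y j : ℝ) : ℂ) := by push_cast; ring
    rw [hc]
    rcases lt_or_gt_of_ne (sub_ne_zero.mpr (h j hj)) with hlt | hgt
    · rw [if_pos (by linarith), A2 _ hlt]
    · rw [if_neg (by rw [not_lt]; linarith), A1 _ hgt, abs_of_pos hgt, one_mul]
  rw [Finset.prod_congr rfl key, Finset.prod_mul_distrib, Finset.prod_ite, Finset.prod_const,
    Finset.prod_const_one, mul_one, gA, Complex.ofReal_prod]

lemma gA_pos (N : ℕ) (y : ℕ → ℝ) (u : ℝ) (h : ∀ j ∈ Finset.Icc 1 (2*N), u ≠ y j) :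
    0 < gA N y u :=
  Finset.prod_pos fun j hj => Real.sqrt_pos.mpr (abs_pos.mpr (sub_ne_zero.mpr (h j hj)))

lemma II_left {f : ℝ → ℝ} {a b C : ℝ} (hab : a < b)
    (hm : AEStronglyMeasurable f (volume.restrict (Set.uIoc a b)))
    (hbound : ∀ u ∈ Set.Ioc a b, |f u| ≤ C * (u - a) ^ (-(1/2) : ℝ)) :
    IntervalIntegrable f volume a b := by
  have h0 : IntervalIntegrable (fun x : ℝ => x ^ (-(1/2) : ℝ)) volume 0 (b - a) :=
    intervalIntegral.intervalIntegrable_rpow' (by norm_num)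
  have h1 : IntervalIntegrable (fun u : ℝ => (u - a) ^ (-(1/2) : ℝ)) volume a b := by
    simpa using h0.comp_sub_right a
  refine (h1.const_mul C).mono_fun hm ?_
  rw [Set.uIoc_of_le hab.le]
  filter_upwards [MeasureTheory.ae_restrict_mem measurableSet_Ioc] with u hu
  have h2 := hbound u hu
  have h3 : (0:ℝ) ≤ (u - a) ^ (-(1/2) : ℝ) := Real.rpow_nonneg (by linarith [hu.1]) _
  calc ‖f u‖ = |f u| := rfl
    _ ≤ C * (u - a) ^ (-(1/2) : ℝ) := h2
    _ ≤ ‖C * (u - a) ^ (-(1/2) : ℝ)‖ := le_abs_self _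

lemma II_right {f : ℝ → ℝ} {a b C : ℝ} (hab : a < b)
    (hm : AEStronglyMeasurable f (volume.restrict (Set.uIoc a b)))
    (hbound : ∀ u ∈ Set.Ico a b, |f u| ≤ C * (b - u) ^ (-(1/2) : ℝ)) :
    IntervalIntegrable f volume a b := by
  have h0 : IntervalIntegrable (fun x : ℝ => x ^ (-(1/2) : ℝ)) volume (b - a) 0 :=
    intervalIntegral.intervalIntegrable_rpow' (by norm_num)
  have h1 : IntervalIntegrable (fun u : ℝ => (b - u) ^ (-(1/2) : ℝ)) volume a b := by
    simpa using h0.comp_sub_left b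
  refine (h1.const_mul C).mono_fun hm ?_
  rw [Set.uIoc_of_le hab.le]
  have hb : ∀ᵐ u : ℝ, u ≠ b := by
    have : (volume : Measure ℝ) {b} = 0 := Real.volume_singleton
    simpa [MeasureTheory.ae_iff] using this
  filter_upwards [MeasureTheory.ae_restrict_mem measurableSet_Ioc, MeasureTheory.ae_mono Measure.restrict_le_self hb] with u hu hub
  have h2 := hbound u ⟨hu.1.le, lt_of_le_of_ne hu.2 hub⟩
  calc ‖f u‖ = |f u| := rfl
    _ ≤ C * (b - u) ^ (-(1/2) : ℝ) := h2
    _ ≤ ‖C * (b - u) ^ (-(1/2) : ℝ)‖ := le_abs_self _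


section interval
variable {N : ℕ} {y : ℕ → ℝ}
  (hy : ∀ i j : ℕ, 1 ≤ i → i < j → j ≤ 2 * N → y i < y j)
  {a : ℕ} (ha1 : 1 ≤ a) (ha2 : a + 1 ≤ 2 * N)

include hy ha1 ha2

lemma hy_le : ∀ i j : ℕ, 1 ≤ i → i ≤ j → j ≤ 2 * N → y i ≤ y j := by
  intro i j h1 h2 h3
  rcases eq_or_lt_of_le h2 with rfl | h
  · exact le_refl _
  · exact (hy i j h1 h h3).le

lemma ne_on {u : ℝ} (hu : u ∈ Set.Ioo (y a) (y (a+1))) :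
    ∀ j ∈ Finset.Icc 1 (2*N), u ≠ y j := by
  intro j hj
  rw [Finset.mem_Icc] at hj
  rcases le_or_gt j a with h | h
  · have : y j ≤ y a := hy_le hy ha1 ha2 j a hj.1 h (by omega)
    exact (lt_of_le_of_lt this hu.1).ne'
  · have : y (a+1) ≤ y j := hy_le hy ha1 ha2 (a+1) j (by omega) h hj.2
    exact (lt_of_lt_of_le hu.2 this).ne

lemma filter_eval {u : ℝ} (hu : u ∈ Set.Ioo (y a) (y (a+1))) :
    (Finset.Icc 1 (2*N)).filter (fun j => u < y j) = Finset.Icc (a+1) (2*N) := by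
  ext j
  simp only [Finset.mem_filter, Finset.mem_Icc]
  constructor
  · rintro ⟨⟨hj1, hj2⟩, hj3⟩
    refine ⟨?_, hj2⟩
    by_contra hc
    push_neg at hc
    have : y j ≤ y a := hy_le hy ha1 ha2 j a hj1 (by omega) (by omega)
    linarith [hu.1]
  · rintro ⟨hj1, hj2⟩
    exact ⟨⟨by omega, hj2⟩, lt_of_lt_of_le hu.2 (hy_le hy ha1 ha2 (a+1) j (by omega) hj1 hj2)⟩

lemma sqrtProd_on {u : ℝ} (hu : u ∈ Set.Ioo (y a) (y (a+1))) :
    sqrtProd N y (u:ℂ) = Complex.I ^ (2*N - a) * (gA N y u : ℂ) := by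
  rw [sqrtProd_factor N y u (ne_on hy ha1 ha2 hu), filter_eval hy ha1 ha2 hu, Nat.card_Icc]
  congr 2
  omega

lemma gA_pos_on {u : ℝ} (hu : u ∈ Set.Ioo (y a) (y (a+1))) : 0 < gA N y u :=
  gA_pos N y u (ne_on hy ha1 ha2 hu)

/-- key decomposition plus lower bound: `gA u ≥ √(u - y a) * √(y (a+1) - u) * δ` on the
closed interval. -/
lemma gA_lower : ∃ δ > (0:ℝ), ∀ u ∈ Set.Icc (y a) (y (a+1)),
    Real.sqrt (u - y a) * Real.sqrt (y (a+1) - u) * δ ≤ gA N y u := by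
  classical
  set S : Finset ℕ := ((Finset.Icc 1 (2*N)).erase a).erase (a+1) with hS
  set rest : ℝ → ℝ := fun u => ∏ j ∈ S, Real.sqrt |u - y j| with hrest
  have hmem_a : a ∈ Finset.Icc 1 (2*N) := by simp [Finset.mem_Icc]; omega
  have hmem_a1 : a + 1 ∈ (Finset.Icc 1 (2*N)).erase a := by
    simp [Finset.mem_erase, Finset.mem_Icc]; omega
  have hsplit : ∀ u : ℝ, gA N y u = Real.sqrt |u - y a| * (Real.sqrt |u - y (a+1)| * rest u) := by
    intro u
    unfold gA
    rw [← Finset.mul_prod_erase _ _ hmem_a, ← Finset.mul_prod_erase _ _ hmem_a1]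
  -- rest is positive on the closed interval
  have hrest_pos : ∀ u ∈ Set.Icc (y a) (y (a+1)), 0 < rest u := by
    intro u hu
    refine Finset.prod_pos fun j hj => Real.sqrt_pos.mpr (abs_pos.mpr (sub_ne_zero.mpr ?_))
    rw [hS] at hj
    have hj2 := Finset.mem_of_mem_erase (Finset.mem_of_mem_erase hj)
    rw [Finset.mem_Icc] at hj2
    have hja : j ≠ a + 1 := Finset.ne_of_mem_erase hj
    have hjb : j ≠ a := Finset.ne_of_mem_erase (Finset.mem_of_mem_erase hj)
    rcases lt_or_gt_of_ne hja with h | h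
    · have h' : j < a := by omega
      have : y j < y a := hy j a hj2.1 h' (by omega)
      have : y j < u := lt_of_lt_of_le this hu.1
      exact this.ne'
    · have : y (a+1) < y j := hy (a+1) j (by omega) h hj2.2
      exact (lt_of_le_of_lt hu.2 this).ne
  -- minimum of rest on the compact interval
  have hab : y a < y (a+1) := hy a (a+1) ha1 (by omega) ha2
  have hcont : ContinuousOn rest (Set.Icc (y a) (y (a+1))) :=
    (continuous_finset_prod _ fun j _ =>
      (Real.continuous_sqrt.comp ((continuous_id.sub continuous_const).abs))).continuousOn
  obtain ⟨u₀, hu₀, hmin'⟩ := isCompact_Icc.exists_isMinOn ⟨y a, by simp [hab.le]⟩ hcont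
  have hmin := isMinOn_iff.mp hmin'
  refine ⟨rest u₀, hrest_pos u₀ hu₀, fun u hu => ?_⟩
  rw [hsplit u, _root_.abs_of_nonneg (by linarith [hu.1] : (0:ℝ) ≤ u - y a), _root_.abs_of_nonpos (by linarith [hu.2] : u - y (a+1) ≤ 0), neg_sub]
  have h1 : (0:ℝ) ≤ Real.sqrt (u - y a) := Real.sqrt_nonneg _
  have h2 : (0:ℝ) ≤ Real.sqrt (y (a+1) - u) := Real.sqrt_nonneg _
  have h3 := hmin u hu
  nlinarith [mul_le_mul_of_nonneg_left h3 (mul_nonneg h1 h2)]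

lemma intervalIntegrable_div_gA {q : ℝ → ℝ} (hq : Continuous q) :
    IntervalIntegrable (fun u => q u / gA N y u) volume (y a) (y (a+1)) := by
  have hab : y a < y (a+1) := hy a (a+1) ha1 (by omega) ha2
  obtain ⟨δ, hδ, hlow⟩ := gA_lower hy ha1 ha2
  set A := y a with hA
  set B := y (a+1) with hB
  set c := (A + B) / 2 with hc
  have hac : A < c := by rw [hc]; linarith
  have hcb : c < B := by rw [hc]; linarith
  -- bound on |q|
  obtain ⟨u₁, _, hmax'⟩ := isCompact_Icc.exists_isMaxOn (Set.nonempty_Icc.mpr hab.le)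
    (hq.abs.continuousOn (s := Set.Icc A B))
  have hmax := isMaxOn_iff.mp hmax'
  set M := |q u₁| with hM
  have hM0 : 0 ≤ M := abs_nonneg _
  -- a.e. measurability
  have hmeas : ∀ s : Set ℝ, AEStronglyMeasurable (fun u => q u / gA N y u) (volume.restrict s) := by
    intro s
    exact ((hq.measurable.div ((gA_cont N y).measurable))).aestronglyMeasurable
  -- positivity of gA on open interval
  have hgpos : ∀ u ∈ Set.Ioo A B, 0 < gA N y u := fun u hu => by
    have := hlow u ⟨hu.1.le, hu.2.le⟩
    have h1 : 0 < Real.sqrt (u - A) := Real.sqrt_pos.mpr (by linarith [hu.1])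
    have h2 : 0 < Real.sqrt (B - u) := Real.sqrt_pos.mpr (by linarith [hu.2])
    have h4 := mul_pos (mul_pos h1 h2) hδ
    linarith
  -- the two halves
  have hK1 : (0:ℝ) < Real.sqrt (B - c) * δ :=
    mul_pos (Real.sqrt_pos.mpr (by linarith)) hδ
  have hK2 : (0:ℝ) < Real.sqrt (c - A) * δ :=
    mul_pos (Real.sqrt_pos.mpr (by linarith)) hδ
  have left : IntervalIntegrable (fun u => q u / gA N y u) volume A c := by
    apply II_left (C := M / (Real.sqrt (B - c) * δ)) hac (hmeas _)
    intro u hu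
    have huB : u < B := lt_of_le_of_lt hu.2 hcb
    have hu' : u ∈ Set.Ioo A B := ⟨hu.1, huB⟩
    have hg := hgpos u hu'
    have hs : 0 < Real.sqrt (u - A) := Real.sqrt_pos.mpr (by linarith [hu.1])
    have hlow2 : Real.sqrt (u - A) * (Real.sqrt (B - c) * δ) ≤ gA N y u := by
      have h1 := hlow u ⟨hu'.1.le, hu'.2.le⟩
      have h2 : Real.sqrt (B - c) ≤ Real.sqrt (B - u) := Real.sqrt_le_sqrt (by linarith [hu.2])
      calc Real.sqrt (u - A) * (Real.sqrt (B - c) * δ)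
          ≤ Real.sqrt (u - A) * (Real.sqrt (B - u) * δ) :=
            mul_le_mul_of_nonneg_left (mul_le_mul_of_nonneg_right h2 hδ.le) hs.le
        _ = Real.sqrt (u - A) * Real.sqrt (B - u) * δ := (mul_assoc _ _ _).symm
        _ ≤ gA N y u := h1
    have hqb : |q u| ≤ M := hmax u ⟨hu.1.le, huB.le⟩
    rw [abs_div, abs_of_pos hg]
    have step1 : |q u| / gA N y u ≤ M / (Real.sqrt (u - A) * (Real.sqrt (B - c) * δ)) :=
      div_le_div₀ hM0 hqb (mul_pos hs hK1) hlow2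
    refine le_trans step1 (le_of_eq ?_)
    rw [Real.rpow_neg (by linarith [hu.1] : (0:ℝ) ≤ u - A), ← Real.sqrt_eq_rpow,
      mul_comm (Real.sqrt (u - A)), ← div_div, div_eq_mul_inv]
  have right : IntervalIntegrable (fun u => q u / gA N y u) volume c B := by
    apply II_right (C := M / (Real.sqrt (c - A) * δ)) hcb (hmeas _)
    intro u hu
    have huA : A < u := lt_of_lt_of_le hac hu.1
    have hu' : u ∈ Set.Ioo A B := ⟨huA, hu.2⟩
    have hg := hgpos u hu'
    have hs : 0 < Real.sqrt (B - u) := Real.sqrt_pos.mpr (by linarith [hu.2])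
    have hlow2 : Real.sqrt (B - u) * (Real.sqrt (c - A) * δ) ≤ gA N y u := by
      have h1 := hlow u ⟨hu'.1.le, hu'.2.le⟩
      have h2 : Real.sqrt (c - A) ≤ Real.sqrt (u - A) := Real.sqrt_le_sqrt (by linarith [hu.1])
      calc Real.sqrt (B - u) * (Real.sqrt (c - A) * δ)
          ≤ Real.sqrt (B - u) * (Real.sqrt (u - A) * δ) :=
            mul_le_mul_of_nonneg_left (mul_le_mul_of_nonneg_right h2 hδ.le) hs.le
        _ = Real.sqrt (u - A) * Real.sqrt (B - u) * δ := by ring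
        _ ≤ gA N y u := h1
    have hqb : |q u| ≤ M := hmax u ⟨huA.le, hu.2.le⟩
    rw [abs_div, abs_of_pos hg]
    have step1 : |q u| / gA N y u ≤ M / (Real.sqrt (B - u) * (Real.sqrt (c - A) * δ)) :=
      div_le_div₀ hM0 hqb (mul_pos hs hK2) hlow2
    refine le_trans step1 (le_of_eq ?_)
    rw [Real.rpow_neg (by linarith [hu.2] : (0:ℝ) ≤ B - u), ← Real.sqrt_eq_rpow,
      mul_comm (Real.sqrt (B - u)), ← div_div, div_eq_mul_inv]
  exact left.trans right


lemma entry_eq (j : ℕ) :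
    (∫ u in (y a)..(y (a+1)), ((u:ℂ) ^ j) / sqrtProd N y u)
      = (Complex.I ^ (2*N - a))⁻¹ * ((∫ u in (y a)..(y (a+1)), u ^ j / gA N y u : ℝ) : ℂ) := by
  have hab : y a < y (a+1) := hy a (a+1) ha1 (by omega) ha2
  have hI : (Complex.I ^ (2*N - a)) ≠ 0 := pow_ne_zero _ Complex.I_ne_zero
  have hcongr : (∫ u in (y a)..(y (a+1)), ((u:ℂ)^j) / sqrtProd N y u)
      = ∫ u in (y a)..(y (a+1)), (Complex.I ^ (2*N - a))⁻¹ * ((u ^ j / gA N y u : ℝ) : ℂ) := by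
    apply intervalIntegral.integral_congr_ae
    have hb : ∀ᵐ u : ℝ, u ≠ y (a+1) := by
      have : (volume : Measure ℝ) {y (a+1)} = 0 := Real.volume_singleton
      simpa [MeasureTheory.ae_iff] using this
    filter_upwards [hb] with u hub hu
    rw [Set.uIoc_of_le hab.le] at hu
    have hu' : u ∈ Set.Ioo (y a) (y (a+1)) := ⟨hu.1, lt_of_le_of_ne hu.2 hub⟩
    rw [sqrtProd_on hy ha1 ha2 hu']
    have hg := (gA_pos_on hy ha1 ha2 hu').ne'
    push_cast
    rw [div_mul_eq_div_div_swap, div_eq_mul_inv ((u:ℂ)^j / _), mul_comm]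
  rw [hcongr, intervalIntegral.integral_const_mul, intervalIntegral.integral_ofReal]


end interval


/-- a continuous function with no zero on an interval and zero weighted integral
forces a contradiction; hence existence of a root. -/
lemma exists_root {N : ℕ} {y : ℕ → ℝ}
    (hy : ∀ i j : ℕ, 1 ≤ i → i < j → j ≤ 2 * N → y i < y j)
    {a : ℕ} (ha1 : 1 ≤ a) (ha2 : a + 1 ≤ 2 * N)
    {p : ℝ → ℝ} (hp : Continuous p)
    (h0 : (∫ u in (y a)..(y (a+1)), p u / gA N y u) = 0) :
    ∃ r ∈ Set.Ioo (y a) (y (a+1)), p r = 0 := by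
  have hab : y a < y (a+1) := hy a (a+1) ha1 (by omega) ha2
  by_contra hno
  push_neg at hno
  -- p has constant sign on the open interval
  have hsign : (∀ u ∈ Set.Ioo (y a) (y (a+1)), 0 < p u) ∨
      (∀ u ∈ Set.Ioo (y a) (y (a+1)), p u < 0) := by
    by_contra hc
    push_neg at hc
    obtain ⟨⟨u1, hu1, hu1'⟩, ⟨u2, hu2, hu2'⟩⟩ := hc
    have h1 : p u1 < 0 := lt_of_le_of_ne hu1' (hno u1 hu1)
    have h2 : 0 < p u2 := lt_of_le_of_ne (by linarith [hu2']) (Ne.symm (hno u2 hu2))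
    have hsub : Set.uIcc u1 u2 ⊆ Set.Ioo (y a) (y (a+1)) :=
      (Set.ordConnected_Ioo).uIcc_subset hu1 hu2
    have h0mem : (0:ℝ) ∈ Set.uIcc (p u1) (p u2) := Set.mem_uIcc.mpr (Or.inl ⟨h1.le, h2.le⟩)
    obtain ⟨r, hr, hr0⟩ := intermediate_value_uIcc hp.continuousOn h0mem
    exact hno r (hsub hr) hr0
  have hii : IntervalIntegrable (fun u => p u / gA N y u) volume (y a) (y (a+1)) :=
    intervalIntegrable_div_gA hy ha1 ha2 hp
  rcases hsign with hs | hs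
  · have hpos := intervalIntegral.intervalIntegral_pos_of_pos_on hii
      (fun x hx => div_pos (hs x hx) (gA_pos_on hy ha1 ha2 hx)) hab
    linarith [hpos, h0.ge, h0.le]
  · have hii' : IntervalIntegrable (fun u => (-p u) / gA N y u) volume (y a) (y (a+1)) :=
      intervalIntegrable_div_gA hy ha1 ha2 hp.neg
    have hpos := intervalIntegral.intervalIntegral_pos_of_pos_on hii'
      (fun x hx => div_pos (by linarith [hs x hx]) (gA_pos_on hy ha1 ha2 hx)) hab
    have : (∫ u in (y a)..(y (a+1)), (-p u) / gA N y u)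
        = -∫ u in (y a)..(y (a+1)), p u / gA N y u := by
      rw [← intervalIntegral.integral_neg]
      congr 1
      funext u
      ring
    rw [this, h0] at hpos
    linarith

/-- The matrix `R` arising in the Schwarz–Christoffel construction of the conformal map onto
a rectangle with horizontal slits is invertible. -/
theorem schwarzChristoffelMatrix_isUnit (N : ℕ) (hN : 3 ≤ N) (y : ℕ → ℝ)
    (hy : ∀ i j : ℕ, 1 ≤ i → i < j → j ≤ 2 * N → y i < y j) :
    IsUnit (schwarzChristoffelMatrix N y) := by
  classical
  have hidx : ∀ i : Fin (N-2), 1 ≤ 2*(i:ℕ)+3 ∧ (2*(i:ℕ)+3) + 1 ≤ 2*N := by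
    intro i
    have := i.isLt
    omega
  set m : Matrix (Fin (N-2)) (Fin (N-2)) ℝ := Matrix.of (fun i j =>
    ∫ u in (y (2*(i:ℕ)+3))..(y (2*(i:ℕ)+4)), u ^ (j:ℕ) / gA N y u) with hm
  -- det m ≠ 0
  have hdet : m.det ≠ 0 := by
    intro h0
    obtain ⟨c, hc0, hc⟩ := Matrix.exists_mulVec_eq_zero_iff.mpr h0
    set p : ℝ → ℝ := fun u => ∑ j : Fin (N-2), c j * u ^ (j:ℕ) with hp
    have hpc : Continuous p := by
      apply continuous_finset_sum
      intro j _
      exact continuous_const.mul (continuous_pow _)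
    have hroot : ∀ i : Fin (N-2), ∃ r ∈ Set.Ioo (y (2*(i:ℕ)+3)) (y (2*(i:ℕ)+3+1)), p r = 0 := by
      intro i
      apply exists_root hy (hidx i).1 (hidx i).2 hpc
      have hii : ∀ j : Fin (N-2), IntervalIntegrable
          (fun u => c j * (u ^ (j:ℕ) / gA N y u)) volume (y (2*(i:ℕ)+3)) (y (2*(i:ℕ)+3+1)) :=
        fun j => (intervalIntegrable_div_gA hy (hidx i).1 (hidx i).2 (continuous_pow _)).const_mul _
      have heq : (fun u => p u / gA N y u)
          = fun u => ∑ j : Fin (N-2), c j * (u ^ (j:ℕ) / gA N y u) := by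
        funext u
        rw [hp]
        simp only [Finset.sum_div, mul_div_assoc]
      rw [heq, intervalIntegral.integral_finset_sum (fun j _ => hii j)]
      have hci := congrFun hc i
      simp only [Matrix.mulVec, dotProduct, hm, Matrix.of_apply, Pi.zero_apply] at hci
      calc (∑ j : Fin (N-2), ∫ u in (y (2*(i:ℕ)+3))..(y (2*(i:ℕ)+3+1)),
              c j * (u ^ (j:ℕ) / gA N y u))
          = ∑ j : Fin (N-2), c j * ∫ u in (y (2*(i:ℕ)+3))..(y (2*(i:ℕ)+3+1)),
              u ^ (j:ℕ) / gA N y u := by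
            refine Finset.sum_congr rfl fun j _ => ?_
            rw [intervalIntegral.integral_const_mul]
        _ = 0 := by
            rw [← hci]
            refine Finset.sum_congr rfl fun j _ => ?_
            rw [mul_comm]
    choose r hr hr0 using hroot
    have hrmono : ∀ i k : Fin (N-2), i < k → r i < r k := by
      intro i k hik
      have h1 : r i < y (2*(i:ℕ)+3+1) := (hr i).2
      have h2 : y (2*(k:ℕ)+3) < r k := (hr k).1
      have h3 : y (2*(i:ℕ)+3+1) ≤ y (2*(k:ℕ)+3) := by
        rcases eq_or_lt_of_le (by omega : 2*(i:ℕ)+3+1 ≤ 2*(k:ℕ)+3) with he | hl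
        · rw [he]
        · exact (hy _ _ (by omega) hl (by have := k.isLt; omega)).le
      linarith
    have hrinj : Function.Injective r := by
      intro i k h
      by_contra hne
      rcases lt_or_gt_of_ne hne with hl | hl
      · exact absurd h (hrmono i k hl).ne
      · exact absurd h.symm (hrmono k i hl).ne
    have hvdm : (Matrix.vandermonde r).det ≠ 0 := Matrix.det_vandermonde_ne_zero_iff.mpr hrinj
    apply hvdm
    rw [← Matrix.exists_mulVec_eq_zero_iff]
    refine ⟨c, hc0, ?_⟩
    funext i
    have := hr0 i
    rw [hp] at this
    simpa [Matrix.mulVec, dotProduct, Matrix.vandermonde, mul_comm] using this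
  -- assembly
  have hentry : ∀ (i j : Fin (N-2)), schwarzChristoffelMatrix N y i j
      = (Complex.I ^ (2*N - (2*(i:ℕ)+3)))⁻¹ * ((m i j : ℝ) : ℂ) := by
    intro i j
    have := entry_eq hy (hidx i).1 (hidx i).2 (j : ℕ)
    simpa [schwarzChristoffelMatrix, hm] using this
  set d : Fin (N-2) → ℂ := fun i => (Complex.I ^ (2*N - (2*(i:ℕ)+3)))⁻¹ with hd
  have hR : schwarzChristoffelMatrix N y
      = Matrix.diagonal d * m.map (Complex.ofRealHom : ℝ →+* ℂ) := by
    ext i j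
    rw [Matrix.diagonal_mul, Matrix.map_apply]
    exact hentry i j
  rw [hR, (Matrix.isUnit_iff_isUnit_det _)]
  rw [Matrix.det_mul, Matrix.det_diagonal]
  have hmap : (m.map (Complex.ofRealHom : ℝ →+* ℂ)).det = Complex.ofRealHom m.det := by
    rw [← RingHom.mapMatrix_apply, ← RingHom.map_det]
  rw [hmap]
  apply IsUnit.mul
  · refine isUnit_iff_ne_zero.mpr (Finset.prod_ne_zero_iff.mpr fun i _ => ?_)
    exact inv_ne_zero (pow_ne_zero _ Complex.I_ne_zero)
  · refine isUnit_iff_ne_zero.mpr ?_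
    simpa using hdet
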